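/- arXiv:1606.01141 — 8 statements merged into one kernel-verified Lean document; each statement's English description precedes it below -/
import Mathlib

section
/- Let 𝒳 be a set and k : 𝒳 × 𝒳 → ℝ≥0 a symmetric strong kernel. Then for every n ∈ ℕ and every finite family X₁, …, X_m of n-element finite subsets of 𝒳, the m × m matrix M with entries M_{ij} = max over bijections B from X_i to X_j of Σ_{x ∈ X_i} k(x, B(x)) is positive semidefinite. In other words, the optimal assignment kernel K^k_𝔅(X,Y) = max_{B ∈ 𝔅(X,Y)} Σ_{(x,y)∈B} k(x,y) built from a strong base kernel is a valid (positive semidefinite) kernel on n-element subsets of 𝒳. -/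
/-!
For every threshold `t`, symmetry and the strong-kernel inequality make `t ≤ k x y` a partial
equivalence relation, so an assignment can match at most `∑_C min |X ∩ C| |Y ∩ C|` pairs of weight
at least `t`, `C` ranging over its classes. Writing every value of `k` as the sum of the gaps
between consecutive values of `k` below it turns this into the upper bound
`K(X, Y) ≤ ∑_t gap_t · ∑_C min |X ∩ C| |Y ∩ C|`, and the greedy assignment, which matches a
heaviest pair first, attains it. Since `min a b = |[0, a) ∩ [0, b)|`, the right-hand side is a
nonnegative combination of Gram matrices, hence positive semidefinite.
-/

open Finset Matrix
open scoped NNReal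

section GapBelow

variable {M : Type*} [AddCommMonoid M] [LinearOrder M] [IsOrderedAddMonoid M]
  [CanonicallyOrderedAdd M] [Sub M] [OrderedSub M] [OrderBot M]

def gapBelow (T : Finset M) (t : M) : M := t - {s ∈ T | s < t}.sup id

theorem sum_gapBelow (T : Finset M) : ∑ t ∈ T, gapBelow T t = T.sup id := by
  induction T using Finset.induction_on_max with
  | empty => simp
  | insert a s ha ih =>
    have hsa : s.sup id ≤ a := Finset.sup_le fun t ht => (ha t ht).le
    have hgap : ∀ t ∈ s, gapBelow (insert a s) t = gapBelow s t := fun t ht => by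
      rw [gapBelow, gapBelow, filter_insert, if_neg (ha t ht).not_gt]
    have hgap_a : gapBelow (insert a s) a = a - s.sup id := by
      rw [gapBelow, filter_insert, if_neg (lt_irrefl a), filter_true_of_mem ha]
    rw [sum_insert fun h => lt_irrefl a (ha a h), sum_congr rfl hgap, ih, hgap_a,
      tsub_add_cancel_of_le hsa, sup_insert, id, sup_eq_left.2 hsa]

theorem sum_gapBelow_filter_le {T : Finset M} {v : M} (hv : v ∈ T) :
    ∑ t ∈ T with t ≤ v, gapBelow T t = v := by
  have hgap : ∀ t ∈ {s ∈ T | s ≤ v}, gapBelow T t = gapBelow {s ∈ T | s ≤ v} t :=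
    fun t ht => by
      rw [gapBelow, gapBelow, filter_filter]
      congr 2
      exact filter_congr fun s _ => ⟨fun h => ⟨(h.trans_le (mem_filter.1 ht).2).le, h⟩, And.right⟩
  rw [sum_congr rfl hgap, sum_gapBelow]
  exact le_antisymm (Finset.sup_le fun s hs => (mem_filter.1 hs).2)
    (le_sup (f := id) (mem_filter.2 ⟨hv, le_rfl⟩))

theorem sum_eq_sum_card_smul_gapBelow {ι : Type*} {T : Finset M} (X : Finset ι) {g : ι → M}
    (hg : ∀ x ∈ X, g x ∈ T) :
    ∑ x ∈ X, g x = ∑ t ∈ T, #{x ∈ X | t ≤ g x} • gapBelow T t := by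
  calc ∑ x ∈ X, g x = ∑ x ∈ X, ∑ t ∈ T with t ≤ g x, gapBelow T t :=
        sum_congr rfl fun x hx => (sum_gapBelow_filter_le (hg x hx)).symm
    _ = ∑ t ∈ T, ∑ x ∈ X with t ≤ g x, gapBelow T t :=
        sum_comm' fun x t => by simp only [mem_filter]; tauto
    _ = ∑ t ∈ T, #{x ∈ X | t ≤ g x} • gapBelow T t := by simp only [sum_const]

end GapBelow

theorem posSemidef_card_inter {ι β : Type*} [Fintype ι] [DecidableEq β] (S : ι → Finset β) :
    (Matrix.of fun i j => (#(S i ∩ S j) : ℝ)).PosSemidef := by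
  set v : β → ι → ℝ := fun b i => if b ∈ S i then 1 else 0
  have h : (Matrix.of fun i j => (#(S i ∩ S j) : ℝ)) =
      ∑ b ∈ univ.biUnion S, vecMulVec (v b) (star (v b)) := by
    ext i j
    rw [Matrix.sum_apply]
    simp only [of_apply, vecMulVec_apply, star_trivial, v, ite_mul, one_mul, zero_mul, ← ite_and]
    rw [sum_boole]
    congr 2
    ext b
    simp only [mem_inter, mem_filter, mem_biUnion, mem_univ, true_and]
    exact ⟨fun h => ⟨⟨i, h.1⟩, h⟩, And.right⟩
  rw [h]
  exact posSemidef_sum _ fun b _ => posSemidef_vecMulVec_self_star (v b)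

theorem Finset.bijOn_update_of_erase {α β : Type*} [DecidableEq α] [DecidableEq β]
    {X : Finset α} {Y : Finset β} {x : α} {y : β} {f : α → β} (hx : x ∈ X) (hy : y ∈ Y)
    (hf : Set.BijOn f (X.erase x) (Y.erase y)) : Set.BijOn (Function.update f x y) X Y := by
  have h := (hf.congr fun a ha => (Function.update_of_ne (ne_of_mem_erase ha) y f).symm).insert
    (a := x) (by simp)
  rwa [Function.update_self, ← coe_insert, ← coe_insert, insert_erase hx, insert_erase hy] at h

section RelClasses

variable {α : Type*} [Fintype α] (r : α → α → Prop) [DecidableRel r]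

def relClass (z : α) : Finset α := {x | r x z}

variable {r}

@[simp]
theorem mem_relClass {x z : α} : x ∈ relClass r z ↔ r x z := by simp [relClass]

theorem relClass_eq_of_rel (hsymm : ∀ ⦃x y⦄, r x y → r y x)
    (htrans : ∀ ⦃x y z⦄, r x y → r y z → r x z) {x z : α} (h : r x z) :
    relClass r x = relClass r z := by
  ext w
  simp only [mem_relClass]
  exact ⟨fun hw => htrans hw h, fun hw => htrans hw (hsymm h)⟩

variable [DecidableEq α] (r)

def relClasses : Finset (Finset α) := ({z | r z z} : Finset α).image (relClass r)

/-- For a partial equivalence relation `r`, `relClasses r` partitions `{z | r z z}`; this is the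
histogram intersection kernel of that partition. -/
def histIntersection (X Y : Finset α) : ℕ := ∑ C ∈ relClasses r, min #(X ∩ C) #(Y ∩ C)

theorem posSemidef_histIntersection {ι : Type*} [Fintype ι] (X : ι → Finset α) :
    (Matrix.of fun i j => (histIntersection r (X i) (X j) : ℝ)).PosSemidef := by
  have h : (Matrix.of fun i j => (histIntersection r (X i) (X j) : ℝ)) =
      ∑ C ∈ relClasses r, Matrix.of fun i j => (#(range #(X i ∩ C) ∩ range #(X j ∩ C)) : ℝ) := by
    ext i j
    simp [histIntersection, Matrix.sum_apply, range_inter_range]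
  rw [h]
  exact posSemidef_sum _ fun C _ => posSemidef_card_inter _

variable {r}

theorem eq_relClass_of_mem (hsymm : ∀ ⦃x y⦄, r x y → r y x)
    (htrans : ∀ ⦃x y z⦄, r x y → r y z → r x z) {C : Finset α}
    (hC : C ∈ relClasses r) {x : α} (hx : x ∈ C) : C = relClass r x := by
  obtain ⟨z, -, rfl⟩ := mem_image.1 hC
  exact (relClass_eq_of_rel hsymm htrans (mem_relClass.1 hx)).symm

theorem rel_of_mem_relClasses (hsymm : ∀ ⦃x y⦄, r x y → r y x)
    (htrans : ∀ ⦃x y z⦄, r x y → r y z → r x z) {C : Finset α}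
    (hC : C ∈ relClasses r) {x y : α} (hx : x ∈ C) (hy : y ∈ C) : r x y := by
  rw [eq_relClass_of_mem hsymm htrans hC hy] at hx
  exact mem_relClass.1 hx

theorem card_eq_sum_card_inter_relClasses (hsymm : ∀ ⦃x y⦄, r x y → r y x)
    (htrans : ∀ ⦃x y z⦄, r x y → r y z → r x z)
    {F : Finset α} (hF : ∀ x ∈ F, r x x) : #F = ∑ C ∈ relClasses r, #(F ∩ C) := by
  rw [card_eq_sum_card_fiberwise (f := relClass r) fun x hx =>
    mem_image_of_mem _ (mem_filter.2 ⟨mem_univ x, hF x hx⟩)]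
  refine sum_congr rfl fun C hC => ?_
  rw [← filter_mem_eq_inter]
  refine congrArg card (filter_congr fun x hx => ?_)
  constructor
  · rintro rfl
    exact mem_relClass.2 (hF x hx)
  · exact fun hxC => (eq_relClass_of_mem hsymm htrans hC hxC).symm

theorem card_filter_rel_le_histIntersection (hsymm : ∀ ⦃x y⦄, r x y → r y x)
    (htrans : ∀ ⦃x y z⦄, r x y → r y z → r x z)
    {X Y : Finset α} {f : α → α} (hinj : Set.InjOn f X) (hmaps : Set.MapsTo f X Y) :
    #{x ∈ X | r x (f x)} ≤ histIntersection r X Y := by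
  rw [card_eq_sum_card_inter_relClasses hsymm htrans fun x hx =>
    htrans (mem_filter.1 hx).2 (hsymm (mem_filter.1 hx).2)]
  refine sum_le_sum fun C hC => le_min ?_ ?_
  · exact card_le_card (inter_subset_inter_right (filter_subset _ X))
  · refine card_le_card_of_injOn f (fun x hx => ?_) (hinj.mono fun x hx => ?_)
    · obtain ⟨hxF, hxC⟩ := mem_inter.1 hx
      obtain ⟨hxX, hxfx⟩ := mem_filter.1 hxF
      rw [eq_relClass_of_mem hsymm htrans hC hxC]
      exact mem_inter.2 ⟨hmaps hxX, mem_relClass.2 (hsymm hxfx)⟩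
    · exact (mem_filter.1 (mem_inter.1 hx).1).1

theorem sum_relClasses_ite_mem (hsymm : ∀ ⦃x y⦄, r x y → r y x)
    (htrans : ∀ ⦃x y z⦄, r x y → r y z → r x z) {x : α}
    (hx : r x x) : ∑ C ∈ relClasses r, (if x ∈ C then 1 else 0) = 1 := by
  rw [sum_boole, Nat.cast_id, card_eq_one]
  refine ⟨relClass r x, eq_singleton_iff_unique_mem.2 ⟨?_, fun C hC => ?_⟩⟩
  · exact mem_filter.2 ⟨mem_image_of_mem _ (mem_filter.2 ⟨mem_univ x, hx⟩), mem_relClass.2 hx⟩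
  · exact eq_relClass_of_mem hsymm htrans (mem_filter.1 hC).1 (mem_filter.1 hC).2

theorem histIntersection_eq_erase_add_one (hsymm : ∀ ⦃x y⦄, r x y → r y x)
    (htrans : ∀ ⦃x y z⦄, r x y → r y z → r x z)
    {X Y : Finset α} {x y : α} (hx : x ∈ X) (hy : y ∈ Y) (hxy : r x y) :
    histIntersection r X Y = histIntersection r (X.erase x) (Y.erase y) + 1 := by
  rw [histIntersection, histIntersection, ← sum_relClasses_ite_mem hsymm htrans
    (htrans hxy (hsymm hxy)), ← sum_add_distrib]
  refine sum_congr rfl fun C hC => ?_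
  by_cases hxC : x ∈ C
  · have hyC : y ∈ C := by
      rw [eq_relClass_of_mem hsymm htrans hC hxC]
      exact mem_relClass.2 (hsymm hxy)
    have hX := card_pos.2 ⟨x, mem_inter.2 ⟨hx, hxC⟩⟩
    have hY := card_pos.2 ⟨y, mem_inter.2 ⟨hy, hyC⟩⟩
    rw [if_pos hxC, erase_inter, erase_inter, card_erase_of_mem (mem_inter.2 ⟨hx, hxC⟩),
      card_erase_of_mem (mem_inter.2 ⟨hy, hyC⟩)]
    omega
  · have hyC : y ∉ C := fun hyC =>
      hxC (by rw [eq_relClass_of_mem hsymm htrans hC hyC]; exact mem_relClass.2 hxy)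
    rw [if_neg hxC, erase_inter, erase_inter, erase_eq_of_notMem fun h => hxC (mem_inter.1 h).2,
      erase_eq_of_notMem fun h => hyC (mem_inter.1 h).2, add_zero]

theorem histIntersection_eq_zero (hsymm : ∀ ⦃x y⦄, r x y → r y x)
    (htrans : ∀ ⦃x y z⦄, r x y → r y z → r x z)
    {X Y : Finset α} (h : ∀ x ∈ X, ∀ y ∈ Y, ¬ r x y) : histIntersection r X Y = 0 := by
  refine sum_eq_zero fun C hC => ?_
  by_contra hne
  obtain ⟨x, hx⟩ := card_pos.1 (lt_min_iff.1 (Nat.pos_of_ne_zero hne)).1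
  obtain ⟨y, hy⟩ := card_pos.1 (lt_min_iff.1 (Nat.pos_of_ne_zero hne)).2
  exact h x (mem_inter.1 hx).1 y (mem_inter.1 hy).1
    (rel_of_mem_relClasses hsymm htrans hC (mem_inter.1 hx).2 (mem_inter.1 hy).2)

end RelClasses

section OptimalAssignment

variable {α : Type*} {k : α → α → ℝ≥0}

theorem threshold_symm (hsymm : ∀ x y, k x y = k y x) (t : ℝ≥0) :
    ∀ ⦃x y⦄, t ≤ k x y → t ≤ k y x :=
  fun x y h => hsymm x y ▸ h

theorem threshold_trans (hstrong : ∀ x y z, min (k x z) (k z y) ≤ k x y) (t : ℝ≥0) :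
    ∀ ⦃x y z⦄, t ≤ k x y → t ≤ k y z → t ≤ k x z :=
  fun x y z hxy hyz => (le_min hxy hyz).trans (hstrong x z y)

variable [Fintype α]

noncomputable def kernelValues (k : α → α → ℝ≥0) : Finset ℝ≥0 :=
  univ.image fun p : α × α => k p.1 p.2

theorem mem_kernelValues (k : α → α → ℝ≥0) (x y : α) : k x y ∈ kernelValues k :=
  mem_image_of_mem _ (mem_univ (x, y))

variable [DecidableEq α]

noncomputable def thresholdHistIntersection (k : α → α → ℝ≥0) (X Y : Finset α) : ℝ≥0 :=
  ∑ t ∈ kernelValues k, histIntersection (t ≤ k · ·) X Y • gapBelow (kernelValues k) t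

theorem posSemidef_thresholdHistIntersection {ι : Type*} [Fintype ι] (k : α → α → ℝ≥0)
    (X : ι → Finset α) :
    (Matrix.of fun i j => (thresholdHistIntersection k (X i) (X j) : ℝ)).PosSemidef := by
  have h : (Matrix.of fun i j => (thresholdHistIntersection k (X i) (X j) : ℝ)) =
      ∑ t ∈ kernelValues k, ((gapBelow (kernelValues k) t : ℝ≥0) : ℝ) •
        Matrix.of fun i j => (histIntersection (t ≤ k · ·) (X i) (X j) : ℝ) := by
    ext i j
    simp [thresholdHistIntersection, Matrix.sum_apply, mul_comm]
  rw [h]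
  exact posSemidef_sum _ fun t _ => (posSemidef_histIntersection _ X).smul (NNReal.coe_nonneg _)

theorem sum_le_thresholdHistIntersection (hsymm : ∀ x y, k x y = k y x)
    (hstrong : ∀ x y z, min (k x z) (k z y) ≤ k x y) {X Y : Finset α} {f : α → α}
    (hinj : Set.InjOn f X) (hmaps : Set.MapsTo f X Y) :
    ∑ x ∈ X, k x (f x) ≤ thresholdHistIntersection k X Y := by
  rw [sum_eq_sum_card_smul_gapBelow X fun x _ => mem_kernelValues k x (f x)]
  exact sum_le_sum fun t _ => nsmul_le_nsmul_left zero_le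
    (card_filter_rel_le_histIntersection (threshold_symm hsymm t) (threshold_trans hstrong t)
      hinj hmaps)

theorem thresholdHistIntersection_eq_erase_add (hsymm : ∀ x y, k x y = k y x)
    (hstrong : ∀ x y z, min (k x z) (k z y) ≤ k x y) {X Y : Finset α} {x y : α}
    (hx : x ∈ X) (hy : y ∈ Y) (hmax : ∀ a ∈ X, ∀ b ∈ Y, k a b ≤ k x y) :
    thresholdHistIntersection k X Y =
      thresholdHistIntersection k (X.erase x) (Y.erase y) + k x y := by
  conv_rhs => rw [← sum_gapBelow_filter_le (mem_kernelValues k x y), sum_filter]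
  rw [thresholdHistIntersection, thresholdHistIntersection, ← sum_add_distrib]
  refine sum_congr rfl fun t _ => ?_
  by_cases ht : t ≤ k x y
  · rw [histIntersection_eq_erase_add_one (threshold_symm hsymm t) (threshold_trans hstrong t)
      hx hy ht, add_smul, one_smul, if_pos ht]
  · have hzero : ∀ {X' Y'}, X' ⊆ X → Y' ⊆ Y → histIntersection (t ≤ k · ·) X' Y' = 0 :=
      fun hX hY => histIntersection_eq_zero (threshold_symm hsymm t) (threshold_trans hstrong t)
        fun a ha b hb hab => ht (hab.trans (hmax a (hX ha) b (hY hb)))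
    rw [hzero subset_rfl subset_rfl, hzero (erase_subset x X) (erase_subset y Y), if_neg ht,
      zero_smul, add_zero]

theorem exists_bijOn_thresholdHistIntersection_le (hsymm : ∀ x y, k x y = k y x)
    (hstrong : ∀ x y z, min (k x z) (k z y) ≤ k x y) {X Y : Finset α} (hXY : #X = #Y) :
    ∃ f : α → α, Set.BijOn f X Y ∧ thresholdHistIntersection k X Y ≤ ∑ x ∈ X, k x (f x) := by
  induction X using Finset.strongInduction generalizing Y with | _ X ih
  rcases X.eq_empty_or_nonempty with rfl | hX
  · obtain rfl := card_eq_zero.1 hXY.symm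
    exact ⟨id, by simp, by simp [thresholdHistIntersection, histIntersection]⟩
  obtain ⟨⟨x, y⟩, hxy, hmax⟩ := exists_max_image (X ×ˢ Y) (fun p => k p.1 p.2)
    (hX.product (card_pos.1 (hXY ▸ hX.card_pos)))
  obtain ⟨hx, hy⟩ : x ∈ X ∧ y ∈ Y := mem_product.1 hxy
  obtain ⟨f, hf, hle⟩ := ih (X.erase x) (erase_ssubset hx) (Y := Y.erase y)
    (by rw [card_erase_of_mem hx, card_erase_of_mem hy, hXY])
  refine ⟨Function.update f x y, bijOn_update_of_erase hx hy hf, ?_⟩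
  calc thresholdHistIntersection k X Y
      = thresholdHistIntersection k (X.erase x) (Y.erase y) + k x y :=
        thresholdHistIntersection_eq_erase_add hsymm hstrong hx hy
          fun a ha b hb => hmax (a, b) (mem_product.2 ⟨ha, hb⟩)
    _ ≤ ∑ a ∈ X.erase x, k a (f a) + k x y := add_le_add_left hle _
    _ = ∑ a ∈ X, k a (Function.update f x y a) := by
        rw [← add_sum_erase X _ hx, Function.update_self, add_comm]
        congr 1
        exact sum_congr rfl fun a ha => by rw [Function.update_of_ne (ne_of_mem_erase ha)]

theorem iSup_sum_equiv_eq_thresholdHistIntersection (hsymm : ∀ x y, k x y = k y x)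
    (hstrong : ∀ x y z, min (k x z) (k z y) ≤ k x y) {X Y : Finset α} (hXY : #X = #Y) :
    ⨆ B : X ≃ Y, ∑ x : X, k x (B x) = thresholdHistIntersection k X Y := by
  obtain ⟨f, hf, hle⟩ := exists_bijOn_thresholdHistIntersection_le hsymm hstrong hXY
  refine le_antisymm (ciSup_le' fun B => ?_) (hle.trans ?_)
  · let g : α → α := fun a => if h : a ∈ X then B ⟨a, h⟩ else a
    have hg : ∀ x : X, g x = B x := fun x => dif_pos x.2
    calc ∑ x : X, k x (B x) = ∑ x ∈ X, k x (g x) := by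
          rw [← sum_coe_sort X]
          simp only [hg]
      _ ≤ thresholdHistIntersection k X Y :=
          sum_le_thresholdHistIntersection hsymm hstrong
            (fun a ha b hb hab => by
              simpa using congrArg Subtype.val (B.injective (Subtype.ext
                ((hg ⟨a, ha⟩).symm.trans (hab.trans (hg ⟨b, hb⟩))))))
            fun a ha => (hg ⟨a, ha⟩).symm ▸ (B ⟨a, ha⟩).2
  · calc ∑ x ∈ X, k x (f x) = ∑ x : X, k x (hf.equiv f x) := (sum_coe_sort X _).symm
      _ ≤ ⨆ B : X ≃ Y, ∑ x : X, k x (B x) :=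
          le_ciSup (f := fun B : X ≃ Y => ∑ x : X, k x (B x)) (Finite.bddAbove_range _)
            (hf.equiv f)

end OptimalAssignment

/-- The optimal assignment kernel built from a symmetric strong base kernel
`k : 𝒳 × 𝒳 → ℝ≥0` is positive semidefinite: for every finite family `X₁, …, X_m` of
`n`-element subsets of `𝒳`, the matrix `M i j = max_{B : X i ≃ X j} ∑_{x ∈ X i} k x (B x)`
satisfies `cᵀ M c ≥ 0` for every real vector `c`. -/
theorem optimal_assignment_kernel_psd
    {𝒳 : Type} [Fintype 𝒳] (k : 𝒳 → 𝒳 → NNReal)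
    (hsymm : ∀ x y : 𝒳, k x y = k y x)
    (hstrong : ∀ x y z : 𝒳, min (k x z) (k z y) ≤ k x y)
    (n m : ℕ) (X : Fin m → Finset 𝒳) (hcard : ∀ i, (X i).card = n)
    (c : Fin m → ℝ) :
    0 ≤ ∑ i : Fin m, ∑ j : Fin m,
        c i *
          (((⨆ B : {x // x ∈ X i} ≃ {y // y ∈ X j},
              ∑ x : {x // x ∈ X i}, k (x : 𝒳) ((B x : 𝒳))) : NNReal) : ℝ) *
          c j := by
  classical
  have hentry : ∀ i j, (⨆ B : {x // x ∈ X i} ≃ {y // y ∈ X j},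
      ∑ x : {x // x ∈ X i}, k (x : 𝒳) ((B x : 𝒳))) = thresholdHistIntersection k (X i) (X j) :=
    fun i j => iSup_sum_equiv_eq_thresholdHistIntersection hsymm hstrong
      ((hcard i).trans (hcard j).symm)
  have hpsd := (posSemidef_thresholdHistIntersection k X).dotProduct_mulVec_nonneg c
  simp only [hentry]
  simpa [dotProduct, mulVec, mul_sum, mul_assoc] using hpsd
end

section
/- Let (T,w) be a hierarchy on a finite set 𝒳 inducing the strong kernel k(x,y) = w(LCA(x,y)), and let ω be its additive weight function. Then for all n-element finite subsets X, Y of 𝒳, the optimal assignment value equals the histogram intersection: max over bijections B from X to Y of Σ_{x∈X} k(x, B(x)) = Σ_{v ∈ V(T)} min(|X_v|, |Y_v|) · ω(v), where for a vertex v and a subset S ⊆ 𝒳, S_v denotes the set of elements of S that are descendants of v (i.e., leaves of the subtree rooted at v). -/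
open scoped Classical

structure Hierarchy (𝒳 : Type) where
  V : Type
  [fintypeV : Fintype V]
  leaf : 𝒳 → V
  leaf_inj : Function.Injective leaf
  root : V
  parent : V → V
  parent_root : parent root = root
  reaches_root : ∀ v : V, ∃ n : ℕ, parent^[n] v = root
  leaf_iff : ∀ v : V, (∀ u : V, parent u = v → u = v) ↔ v ∈ Set.range leaf
  w : V → NNReal
  w_le : ∀ v : V, w (parent v) ≤ w v

attribute [instance] Hierarchy.fintypeV

namespace Hierarchy

variable {𝒳 : Type} (H : Hierarchy 𝒳)

/-- `u` is an ancestor of `v` (i.e. `u` lies on the iterated-parent path from `v` to the root). -/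
def IsAncestor (v u : H.V) : Prop := ∃ n : ℕ, H.parent^[n] v = u

/-- The depth of a vertex: the number of edges on the path to the root. -/
noncomputable def depth (v : H.V) : ℕ := sInf {n : ℕ | H.parent^[n] v = H.root}

/-- `u` is a lowest common ancestor of `x` and `y`: a common ancestor of maximal depth. -/
def IsLCA (x y u : H.V) : Prop :=
  H.IsAncestor x u ∧ H.IsAncestor y u ∧
    ∀ u' : H.V, H.IsAncestor x u' → H.IsAncestor y u' → H.depth u' ≤ H.depth u

/-- The additive weight function `ω`. -/
noncomputable def omega (v : H.V) : NNReal :=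
  if v = H.root then H.w v else H.w v - H.w (H.parent v)

end Hierarchy

/-!
Expanding `w (lca x y)` as the sum of `ω` over the common ancestors of `x` and `y`, the value of
an assignment `B` becomes `∑ᵥ m_B(v) ω(v)`, where `m_B(v)` counts the `x ∈ X_v` with
`B x ∈ Y_v`; clearly `m_B(v) ≤ min |X_v| |Y_v|`. The sets of leaves below the vertices form a
laminar family, and for a laminar family a bijection maximising `∑ᵥ m_B(v)` attains all these
bounds at once: if `m_B(u)` falls short, some `x ∈ X_u` is sent outside `Y_u` and some
`x' ∉ X_u` is sent into `Y_u`, and swapping their images raises `m_B(u)` without lowering any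
other `m_B(v)`.
-/

open Finset

def IsLaminar {α ι : Type*} (D : ι → Set α) : Prop :=
  ∀ u v, (D u ∩ D v).Nonempty → D u ⊆ D v ∨ D v ⊆ D u

lemma IsLaminar.subset_of_mem_of_notMem {α ι : Type*} {D : ι → Set α} (hD : IsLaminar D)
    {u v : ι} {a b : α} (hau : a ∈ D u) (hav : a ∈ D v) (hbv : b ∈ D v) (hbu : b ∉ D u) :
    D u ⊆ D v :=
  (hD u v ⟨a, hau, hav⟩).resolve_right fun h => hbu (h hbv)

lemma Finset.card_filter_univ_subtype {α : Type*} (X : Finset α) (p : α → Prop)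
    [DecidablePred p] : #(univ.filter fun x : X => p x) = #(X.filter p) := by
  rw [univ_eq_attach, filter_attach, card_map, card_attach]

lemma Fintype.sum_add_eq_sum_trans_swap_add {β γ M : Type*} [Fintype β] [DecidableEq β]
    [DecidableEq γ] [AddCommMonoid M] (c : β → γ → M) (B : β ≃ γ) {a b : β} (hab : a ≠ b) :
    ∑ z, c z (B z) + (c a (B b) + c b (B a)) =
      ∑ z, c z (B.trans (Equiv.swap (B a) (B b)) z) + (c a (B a) + c b (B b)) := by
  have hout : ∑ z ∈ {a, b}ᶜ, c z (B z) =
      ∑ z ∈ {a, b}ᶜ, c z (B.trans (Equiv.swap (B a) (B b)) z) := by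
    refine Finset.sum_congr rfl fun z hz => ?_
    simp only [mem_compl, mem_insert, mem_singleton, not_or] at hz
    rw [Equiv.trans_apply, Equiv.swap_apply_of_ne_of_ne (B.injective.ne hz.1) (B.injective.ne hz.2)]
  simp only [← sum_compl_add_sum {a, b}, sum_pair hab, hout, Equiv.trans_apply,
    Equiv.swap_apply_left, Equiv.swap_apply_right]
  abel

section Laminar

variable {α ι : Type*} (D : ι → Set α) {X Y : Finset α}

noncomputable def matchCount (B : X ≃ Y) (u : ι) : ℕ :=
  #(univ.filter fun x : X => (x : α) ∈ D u ∧ (B x : α) ∈ D u)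

lemma card_filter_apply_mem (B : X ≃ Y) (u : ι) :
    #(univ.filter fun x : X => (B x : α) ∈ D u) = #(Y.filter (· ∈ D u)) :=
  (card_equiv B (by simp)).trans (card_filter_univ_subtype Y (· ∈ D u))

lemma matchCount_le_left (B : X ≃ Y) (u : ι) : matchCount D B u ≤ #(X.filter (· ∈ D u)) :=
  (card_le_card (monotone_filter_right _ fun _ _ h => h.1)).trans_eq
    (card_filter_univ_subtype X (· ∈ D u))

lemma matchCount_le_right (B : X ≃ Y) (u : ι) : matchCount D B u ≤ #(Y.filter (· ∈ D u)) :=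
  (card_le_card (monotone_filter_right _ fun _ _ h => h.2)).trans_eq (card_filter_apply_mem D B u)

lemma exists_mem_apply_notMem (B : X ≃ Y) {u : ι}
    (h : matchCount D B u < #(X.filter (· ∈ D u))) : ∃ x : X, (x : α) ∈ D u ∧ (B x : α) ∉ D u := by
  by_contra! hall
  refine h.not_ge ((card_filter_univ_subtype X (· ∈ D u)).symm.trans_le (card_le_card ?_))
  exact monotone_filter_right _ fun x _ hx => ⟨hx, hall x hx⟩

lemma exists_notMem_apply_mem (B : X ≃ Y) {u : ι}
    (h : matchCount D B u < #(Y.filter (· ∈ D u))) : ∃ x : X, (x : α) ∉ D u ∧ (B x : α) ∈ D u := by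
  by_contra! hall
  refine h.not_ge ((card_filter_apply_mem D B u).symm.trans_le (card_le_card ?_))
  exact monotone_filter_right _ fun x _ hx => ⟨by_contra fun h' => hall x h' hx, hx⟩

lemma sum_sum_ite_eq_sum_matchCount_mul [Fintype ι] {R : Type*} [NonAssocSemiring R]
    (B : X ≃ Y) (ω : ι → R) :
    ∑ x : X, ∑ u, (if (x : α) ∈ D u ∧ (B x : α) ∈ D u then ω u else 0) =
      ∑ u, (matchCount D B u : R) * ω u := by
  rw [sum_comm]
  refine sum_congr rfl fun u _ => ?_
  rw [← sum_filter, sum_const, nsmul_eq_mul, matchCount]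

namespace IsLaminar

variable {D} (hD : IsLaminar D)
include hD

lemma matchCount_add_ite_le_matchCount_swap (B : X ≃ Y) {u : ι} {x x₂ : X}
    (hx : (x : α) ∈ D u) (hBx : (B x : α) ∉ D u) (hx₂ : (x₂ : α) ∉ D u) (hBx₂ : (B x₂ : α) ∈ D u)
    (v : ι) :
    matchCount D B v + (if v = u then 1 else 0) ≤
      matchCount D (B.trans (Equiv.swap (B x) (B x₂))) v := by
  have hne : x ≠ x₂ := by rintro rfl; exact hx₂ hx
  have hsum := Fintype.sum_add_eq_sum_trans_swap_add
    (fun (z : X) (y : Y) => if (z : α) ∈ D v ∧ (y : α) ∈ D v then 1 else 0) B hne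
  have hpair : (if (x : α) ∈ D v ∧ (B x : α) ∈ D v then 1 else 0) +
      (if (x₂ : α) ∈ D v ∧ (B x₂ : α) ∈ D v then 1 else 0) + (if v = u then 1 else 0) ≤
      (if (x : α) ∈ D v ∧ (B x₂ : α) ∈ D v then 1 else 0) +
      (if (x₂ : α) ∈ D v ∧ (B x : α) ∈ D v then 1 else 0) := by
    by_cases hvu : v = u
    · subst hvu
      simp [hx, hBx, hx₂, hBx₂]
    -- a set of the family containing an old pair meets `D u` and leaves it, so it contains `D u`
    · have h₁ : (x : α) ∈ D v → (B x : α) ∈ D v → (B x₂ : α) ∈ D v := fun h h' =>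
        hD.subset_of_mem_of_notMem hx h h' hBx hBx₂
      have h₂ : (x₂ : α) ∈ D v → (B x₂ : α) ∈ D v → (x : α) ∈ D v := fun h h' =>
        hD.subset_of_mem_of_notMem hBx₂ h' h hx₂ hx
      split_ifs <;> simp_all
  simp only [matchCount, card_filter]
  omega

variable [Fintype ι]

lemma exists_sum_matchCount_lt (B : X ≃ Y) {u : ι}
    (h : matchCount D B u < min #(X.filter (· ∈ D u)) #(Y.filter (· ∈ D u))) :
    ∃ B' : X ≃ Y, ∑ v, matchCount D B v < ∑ v, matchCount D B' v := by
  obtain ⟨x, hx, hBx⟩ := exists_mem_apply_notMem D B (lt_min_iff.1 h).1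
  obtain ⟨x₂, hx₂, hBx₂⟩ := exists_notMem_apply_mem D B (lt_min_iff.1 h).2
  refine ⟨B.trans (Equiv.swap (B x) (B x₂)), ?_⟩
  have hle := sum_le_sum fun v (_ : v ∈ univ) =>
    hD.matchCount_add_ite_le_matchCount_swap B hx hBx hx₂ hBx₂ v
  rw [sum_add_distrib, sum_ite_eq' univ u] at hle
  simpa using hle

theorem exists_matchCount_eq_min (hXY : #X = #Y) :
    ∃ B : X ≃ Y, ∀ u, matchCount D B u = min #(X.filter (· ∈ D u)) #(Y.filter (· ∈ D u)) := by
  have : Nonempty (X ≃ Y) := ⟨Fintype.equivOfCardEq (by simpa using hXY)⟩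
  obtain ⟨B, hB⟩ := Finite.exists_max fun B : X ≃ Y => ∑ v, matchCount D B v
  refine ⟨B, fun u => (le_min (matchCount_le_left D B u) (matchCount_le_right D B u)).antisymm ?_⟩
  by_contra! h
  obtain ⟨B', hB'⟩ := hD.exists_sum_matchCount_lt B h
  exact (hB B').not_gt hB'

theorem iSup_sum_matchCount_mul (hXY : #X = #Y) (ω : ι → NNReal) :
    ⨆ B : X ≃ Y, ∑ u, (matchCount D B u : NNReal) * ω u =
      ∑ u, ((min #(X.filter (· ∈ D u)) #(Y.filter (· ∈ D u)) : ℕ) : NNReal) * ω u := by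
  obtain ⟨B₀, hB₀⟩ := hD.exists_matchCount_eq_min hXY
  have : Nonempty (X ≃ Y) := ⟨B₀⟩
  have hle (B : X ≃ Y) : ∑ u, (matchCount D B u : NNReal) * ω u ≤
      ∑ u, ((min #(X.filter (· ∈ D u)) #(Y.filter (· ∈ D u)) : ℕ) : NNReal) * ω u :=
    sum_le_sum fun u _ => mul_le_mul_left
      (Nat.cast_le.2 (le_min (matchCount_le_left D B u) (matchCount_le_right D B u))) _
  refine (ciSup_le hle).antisymm ?_
  simp_rw [← hB₀]
  exact Finite.le_ciSup (fun B : X ≃ Y => ∑ u, (matchCount D B u : NNReal) * ω u) B₀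

end IsLaminar

end Laminar

namespace Hierarchy

variable {𝒳 : Type} (H : Hierarchy 𝒳)

lemma iterate_parent_root (n : ℕ) : H.parent^[n] H.root = H.root :=
  Function.iterate_fixed H.parent_root n

lemma iterate_parent_depth (v : H.V) : H.parent^[H.depth v] v = H.root :=
  Nat.sInf_mem (H.reaches_root v)

lemma depth_le_of_iterate_parent {v : H.V} {n : ℕ} (h : H.parent^[n] v = H.root) :
    H.depth v ≤ n :=
  Nat.sInf_le h

lemma iterate_parent_of_depth_le {v : H.V} {n : ℕ} (h : H.depth v ≤ n) :
    H.parent^[n] v = H.root := by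
  rw [← Nat.sub_add_cancel h, Function.iterate_add_apply, H.iterate_parent_depth,
    H.iterate_parent_root]

lemma depth_root : H.depth H.root = 0 :=
  Nat.le_zero.mp (H.depth_le_of_iterate_parent (n := 0) rfl)

lemma eq_root_of_depth_eq_zero {v : H.V} (h : H.depth v = 0) : v = H.root :=
  H.iterate_parent_of_depth_le (n := 0) h.le

lemma depth_iterate_parent {v : H.V} {m : ℕ} (h : m ≤ H.depth v) :
    H.depth (H.parent^[m] v) = H.depth v - m := by
  have h₁ : H.depth (H.parent^[m] v) ≤ H.depth v - m := by
    apply H.depth_le_of_iterate_parent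
    rw [← Function.iterate_add_apply]
    exact H.iterate_parent_of_depth_le (by omega)
  have h₂ : H.depth v ≤ H.depth (H.parent^[m] v) + m := by
    apply H.depth_le_of_iterate_parent
    rw [Function.iterate_add_apply, H.iterate_parent_depth]
  omega

lemma depth_parent {v : H.V} (hv : v ≠ H.root) : H.depth (H.parent v) = H.depth v - 1 :=
  H.depth_iterate_parent (m := 1) (Nat.one_le_iff_ne_zero.2 (mt H.eq_root_of_depth_eq_zero hv))

namespace IsAncestor

variable {H}

lemma refl (v : H.V) : H.IsAncestor v v := ⟨0, rfl⟩

lemma trans {v u t : H.V} (h₁ : H.IsAncestor v u) (h₂ : H.IsAncestor u t) : H.IsAncestor v t := by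
  obtain ⟨m, rfl⟩ := h₁
  obtain ⟨k, rfl⟩ := h₂
  exact ⟨k + m, Function.iterate_add_apply _ _ _ _⟩

lemma exists_le_depth {v u : H.V} (h : H.IsAncestor v u) :
    ∃ m ≤ H.depth v, H.parent^[m] v = u := by
  obtain ⟨m, rfl⟩ := h
  rcases le_or_gt m (H.depth v) with hm | hm
  · exact ⟨m, hm, rfl⟩
  · exact ⟨H.depth v, le_rfl, by
      rw [H.iterate_parent_depth, H.iterate_parent_of_depth_le hm.le]⟩

lemma depth_le {v u : H.V} (h : H.IsAncestor v u) : H.depth u ≤ H.depth v := by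
  obtain ⟨m, hm, rfl⟩ := h.exists_le_depth
  rw [H.depth_iterate_parent hm]
  omega

lemma of_depth_le {v a b : H.V} (ha : H.IsAncestor v a) (hb : H.IsAncestor v b)
    (h : H.depth a ≤ H.depth b) : H.IsAncestor b a := by
  obtain ⟨m, hm, rfl⟩ := ha.exists_le_depth
  obtain ⟨k, hk, rfl⟩ := hb.exists_le_depth
  rw [H.depth_iterate_parent hm, H.depth_iterate_parent hk] at h
  exact ⟨m - k, by rw [← Function.iterate_add_apply, Nat.sub_add_cancel (by omega)]⟩

lemma total {v a b : H.V} (ha : H.IsAncestor v a) (hb : H.IsAncestor v b) :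
    H.IsAncestor a b ∨ H.IsAncestor b a :=
  (le_total (H.depth b) (H.depth a)).imp (of_depth_le hb ha) (of_depth_le ha hb)

lemma iff_eq_or_parent {v u : H.V} : H.IsAncestor v u ↔ u = v ∨ H.IsAncestor (H.parent v) u := by
  constructor
  · rintro ⟨_ | k, rfl⟩
    · exact Or.inl rfl
    · exact Or.inr ⟨k, (Function.iterate_succ_apply _ _ _).symm⟩
  · rintro (rfl | ⟨k, rfl⟩)
    · exact refl _
    · exact ⟨k + 1, Function.iterate_succ_apply _ _ _⟩

end IsAncestor

noncomputable def ancestors (v : H.V) : Finset H.V := univ.filter (H.IsAncestor v)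

@[simp]
lemma mem_ancestors {v u : H.V} : u ∈ H.ancestors v ↔ H.IsAncestor v u := by
  simp [ancestors]

lemma ancestors_root : H.ancestors H.root = {H.root} := by
  ext u
  simp only [mem_ancestors, mem_singleton]
  constructor
  · rintro ⟨m, rfl⟩
    exact H.iterate_parent_root m
  · rintro rfl
    exact .refl _

lemma ancestors_eq_insert_parent (v : H.V) : H.ancestors v = insert v (H.ancestors (H.parent v)) := by
  ext u
  rw [mem_insert, mem_ancestors, mem_ancestors, IsAncestor.iff_eq_or_parent]

lemma notMem_ancestors_parent {v : H.V} (hv : v ≠ H.root) : v ∉ H.ancestors (H.parent v) := by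
  intro h
  have hle := (H.mem_ancestors.1 h).depth_le
  have hpos := Nat.pos_of_ne_zero (mt H.eq_root_of_depth_eq_zero hv)
  rw [H.depth_parent hv] at hle
  omega

theorem w_eq_sum_omega_ancestors (v : H.V) : H.w v = ∑ u ∈ H.ancestors v, H.omega u := by
  induction hd : H.depth v generalizing v with
  | zero =>
    obtain rfl := H.eq_root_of_depth_eq_zero hd
    rw [H.ancestors_root, sum_singleton, omega, if_pos rfl]
  | succ k ih =>
    have hv : v ≠ H.root := by
      rintro rfl
      rw [H.depth_root] at hd
      omega
    rw [H.ancestors_eq_insert_parent, sum_insert (H.notMem_ancestors_parent hv),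
      ← ih _ (by rw [H.depth_parent hv, hd]; rfl), omega, if_neg hv,
      tsub_add_cancel_of_le (H.w_le v)]

lemma ancestors_of_isLCA {x y l : H.V} (hl : H.IsLCA x y l) :
    H.ancestors l = univ.filter fun u => H.IsAncestor x u ∧ H.IsAncestor y u := by
  obtain ⟨hxl, hyl, hmax⟩ := hl
  ext u
  simp only [mem_ancestors, mem_filter, mem_univ, true_and]
  exact ⟨fun h => ⟨hxl.trans h, hyl.trans h⟩,
    fun ⟨hxu, hyu⟩ => hxu.of_depth_le hxl (hmax u hxu hyu)⟩

def leavesBelow (u : H.V) : Set 𝒳 := {a | H.IsAncestor (H.leaf a) u}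

lemma isLaminar_leavesBelow : IsLaminar H.leavesBelow := by
  rintro u v ⟨a, hau, hav⟩
  exact (IsAncestor.total hau hav).imp (fun huv _ hb => IsAncestor.trans hb huv)
    (fun hvu _ hb => IsAncestor.trans hb hvu)

lemma w_eq_sum_omega_of_isLCA {x y : 𝒳} {l : H.V} (hl : H.IsLCA (H.leaf x) (H.leaf y) l) :
    H.w l = ∑ u, if x ∈ H.leavesBelow u ∧ y ∈ H.leavesBelow u then H.omega u else 0 := by
  rw [H.w_eq_sum_omega_ancestors, H.ancestors_of_isLCA hl, sum_filter]
  rfl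

end Hierarchy

theorem optimal_assignment_eq_histogram_intersection_general {𝒳 : Type}
    (H : Hierarchy 𝒳) (lca : 𝒳 → 𝒳 → H.V)
    (hlca : ∀ x y : 𝒳, H.IsLCA (H.leaf x) (H.leaf y) (lca x y))
    (n : ℕ) (X Y : Finset 𝒳) (hX : X.card = n) (hY : Y.card = n) :
    (⨆ B : {x // x ∈ X} ≃ {y // y ∈ Y},
        ∑ x : {x // x ∈ X}, H.w (lca (x : 𝒳) ((B x : 𝒳))))
      = ∑ v : H.V,
          ((min ((X.filter fun a => H.IsAncestor (H.leaf a) v).card)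
                ((Y.filter fun a => H.IsAncestor (H.leaf a) v).card) : ℕ) : NNReal)
            * H.omega v := by
  have hvalue : ∀ B : X ≃ Y, ∑ x : X, H.w (lca x (B x)) =
      ∑ v, (matchCount H.leavesBelow B v : NNReal) * H.omega v := fun B => by
    simp only [H.w_eq_sum_omega_of_isLCA (hlca _ _)]
    exact sum_sum_ite_eq_sum_matchCount_mul _ B H.omega
  simp only [hvalue]
  exact H.isLaminar_leavesBelow.iSup_sum_matchCount_mul (hX.trans hY.symm) H.omega

/-- For a hierarchy `(T, w)` on a finite set `𝒳` inducing the strong kernel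
`k x y = w (LCA x y)`, the optimal assignment value between `n`-element subsets `X, Y`
equals the histogram intersection `∑_v min |X_v| |Y_v| * ω v`. -/
theorem optimal_assignment_eq_histogram_intersection {𝒳 : Type} [Fintype 𝒳]
    (H : Hierarchy 𝒳) (lca : 𝒳 → 𝒳 → H.V)
    (hlca : ∀ x y : 𝒳, H.IsLCA (H.leaf x) (H.leaf y) (lca x y))
    (n : ℕ) (X Y : Finset 𝒳) (hX : X.card = n) (hY : Y.card = n) :
    (⨆ B : {x // x ∈ X} ≃ {y // y ∈ Y},
        ∑ x : {x // x ∈ X}, H.w (lca (x : 𝒳) ((B x : 𝒳))))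
      = ∑ v : H.V,
          ((min ((X.filter fun a => H.IsAncestor (H.leaf a) v).card)
                ((Y.filter fun a => H.IsAncestor (H.leaf a) v).card) : ℕ) : NNReal)
            * H.omega v :=
  optimal_assignment_eq_histogram_intersection_general H lca hlca n X Y hX hY
end

section
/- For every strong kernel k : 𝒳 × 𝒳 → ℝ≥0 on a finite set 𝒳 there exists a hierarchy (T,w) on 𝒳 that induces k, i.e., such that k(x,y) = w(LCA(x,y)) for all x, y ∈ 𝒳. -/
open scoped Classical

/-
In a strong kernel every point of a closed ball `B(x, t) = {y | t ≤ k x y}` is one of its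
centres, so any two balls that meet are nested: the balls form a laminar family. Ordered by
inclusion, with the points hung below the smallest balls containing them, they form a rooted tree
whose root is the whole space. Weighting a vertex by the minimum of `k` over pairs of its points
gives a monotone weight, and for `x ≠ y` the lowest common ancestor of `x` and `y` is the ball
`B(x, k x y)`, whose weight is `k x y`.
-/

open Finset Sum

namespace Hierarchy

variable {𝒳 : Type} (H : Hierarchy 𝒳)

theorem depth_le_of_isAncestor {v u : H.V} (h : H.IsAncestor v u) : H.depth u ≤ H.depth v := by
  obtain ⟨n, rfl⟩ := h
  have hv : H.parent^[H.depth v] v = H.root := Nat.sInf_mem (H.reaches_root v)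
  apply Nat.sInf_le
  change H.parent^[H.depth v] (H.parent^[n] v) = H.root
  rw [← Function.iterate_add_apply, add_comm, Function.iterate_add_apply, hv,
    Function.iterate_fixed H.parent_root]

theorem isLCA_self (v : H.V) : H.IsLCA v v v :=
  ⟨⟨0, rfl⟩, ⟨0, rfl⟩, fun _ h _ => H.depth_le_of_isAncestor h⟩

end Hierarchy

theorem Function.exists_apply_eq_and_ne_of_iterate_eq {β : Type*} {f : β → β} {a b : β} {n : ℕ}
    (h : f^[n] a = b) (hab : a ≠ b) : ∃ u, f u = b ∧ u ≠ b := by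
  induction n with
  | zero => exact absurd h hab
  | succ n ih =>
    rw [Function.iterate_succ_apply'] at h
    by_cases hn : f^[n] a = b
    · exact ih hn
    · exact ⟨_, h, hn⟩

structure LaminarFamily (α : Type) [Fintype α] where
  mem : Finset α → Prop
  univ_mem : mem univ
  nonempty_of_mem : ∀ {S}, mem S → S.Nonempty
  subset_or_subset : ∀ {S T a}, mem S → mem T → a ∈ S → a ∈ T → S ⊆ T ∨ T ⊆ S

namespace LaminarFamily

variable {α : Type} [Fintype α] (F : LaminarFamily α)

abbrev Vertex : Type := α ⊕ {S : Finset α // F.mem S}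

def carrier : F.Vertex → Finset α
  | inl x => {x}
  | inr S => S.1

/-- A leaf `x` lies strictly below every member containing `x`, including `{x}` itself. -/
def StrictlyBelow : F.Vertex → Finset α → Prop
  | inl x, T => x ∈ T
  | inr S, T => S.1 ⊂ T

def root : F.Vertex := inr ⟨univ, F.univ_mem⟩

/-- The root is the only vertex with no member strictly above it; it is its own parent. -/
noncomputable def parent (v : F.Vertex) : F.Vertex :=
  if h : ∃ M, IsLeast {T | F.mem T ∧ F.StrictlyBelow v T} M then
    inr ⟨h.choose, h.choose_spec.1.1⟩
  else v

variable {F}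

theorem carrier_nonempty (v : F.Vertex) : (F.carrier v).Nonempty := by
  cases v with
  | inl x => exact singleton_nonempty x
  | inr S => exact F.nonempty_of_mem S.2

/-- Members sharing a point form a chain, so a minimal one is least. -/
theorem exists_isLeast {Q : Finset α → Prop} {a : α} (hQ : Q univ) (ha : ∀ T, Q T → a ∈ T) :
    ∃ M, IsLeast {T | F.mem T ∧ Q T} M := by
  obtain ⟨M, hM⟩ := exists_minimal_of_wellFoundedLT (fun T => F.mem T ∧ Q T) ⟨univ, F.univ_mem, hQ⟩
  refine ⟨M, hM.prop, fun T hT => ?_⟩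
  rcases F.subset_or_subset hM.prop.1 hT.1 (ha M hM.prop.2) (ha T hT.2) with h | h
  · exact h
  · exact hM.le_of_le hT h

theorem exists_isLeast_of_ne_root {v : F.Vertex} (hv : v ≠ F.root) :
    ∃ M, IsLeast {T | F.mem T ∧ F.StrictlyBelow v T} M := by
  cases v with
  | inl x => exact exists_isLeast (Q := (x ∈ ·)) (mem_univ x) fun _ h => h
  | inr S =>
    obtain ⟨a, ha⟩ := F.nonempty_of_mem S.2
    have hS : S.1 ≠ univ := fun h => hv (congrArg inr (Subtype.ext h))
    exact exists_isLeast (Q := (S.1 ⊂ ·)) (ssubset_univ_iff.2 hS) fun _ h => h.subset ha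

theorem parent_eq_of_isLeast {v : F.Vertex} {M : Finset α}
    (hM : IsLeast {T | F.mem T ∧ F.StrictlyBelow v T} M) : F.parent v = inr ⟨M, hM.1.1⟩ := by
  have h : ∃ M, IsLeast {T | F.mem T ∧ F.StrictlyBelow v T} M := ⟨M, hM⟩
  rw [parent, dif_pos h]
  congr 2
  exact h.choose_spec.unique hM

theorem parent_root : F.parent F.root = F.root := by
  rw [parent, dif_neg]
  rintro ⟨M, ⟨-, hM⟩, -⟩
  exact (subset_univ M).not_ssuperset hM

theorem parent_ne_inl (u : F.Vertex) (x : α) : F.parent u ≠ inl x := by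
  by_cases hu : u = F.root
  · rw [hu, parent_root, root]
    exact inr_ne_inl
  · obtain ⟨M, hM⟩ := exists_isLeast_of_ne_root hu
    rw [parent_eq_of_isLeast hM]
    exact inr_ne_inl

theorem carrier_subset_carrier_parent (v : F.Vertex) : F.carrier v ⊆ F.carrier (F.parent v) := by
  by_cases hv : v = F.root
  · rw [hv, parent_root]
  obtain ⟨M, hM⟩ := exists_isLeast_of_ne_root hv
  rw [parent_eq_of_isLeast hM]
  cases v with
  | inl x => exact singleton_subset_iff.2 hM.1.2
  | inr S => exact hM.1.2.subset

theorem carrier_subset_carrier_iterate_parent (v : F.Vertex) (n : ℕ) :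
    F.carrier v ⊆ F.carrier (F.parent^[n] v) := by
  induction n with
  | zero => exact subset_rfl
  | succ n ih =>
    rw [Function.iterate_succ_apply']
    exact ih.trans (carrier_subset_carrier_parent _)

theorem exists_iterate_parent_eq_of_subset {S T : Finset α} (hS : F.mem S) (hT : F.mem T)
    (hST : S ⊆ T) : ∃ n, F.parent^[n] (inr ⟨S, hS⟩) = inr ⟨T, hT⟩ := by
  induction S using WellFoundedGT.induction with
  | _ S ih =>
  rcases hST.eq_or_ssubset with rfl | hST
  · exact ⟨0, rfl⟩
  have hS_ne : (inr ⟨S, hS⟩ : F.Vertex) ≠ F.root := by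
    rintro ⟨⟩
    exact (subset_univ T).not_ssuperset hST
  obtain ⟨M, hM⟩ := exists_isLeast_of_ne_root hS_ne
  obtain ⟨n, hn⟩ := ih M hM.1.2 hM.1.1 (hM.2 ⟨hT, hST⟩)
  exact ⟨n + 1, by rw [Function.iterate_succ_apply, parent_eq_of_isLeast hM, hn]⟩

theorem exists_iterate_parent_inl_eq_iff {x : α} {u : F.Vertex} :
    (∃ n, F.parent^[n] (inl x) = u) ↔ x ∈ F.carrier u := by
  constructor
  · rintro ⟨n, rfl⟩
    exact carrier_subset_carrier_iterate_parent (inl x) n (mem_singleton_self x)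
  · intro hx
    cases u with
    | inl y =>
      rw [mem_singleton.1 hx]
      exact ⟨0, rfl⟩
    | inr S =>
      obtain ⟨M, hM⟩ := exists_isLeast_of_ne_root (v := inl x) inl_ne_inr
      obtain ⟨n, hn⟩ := exists_iterate_parent_eq_of_subset hM.1.1 S.2 (hM.2 ⟨S.2, hx⟩)
      exact ⟨n + 1, by rw [Function.iterate_succ_apply, parent_eq_of_isLeast hM, hn]⟩

theorem leaf_iff (v : F.Vertex) :
    (∀ u, F.parent u = v → u = v) ↔ v ∈ Set.range inl := by
  cases v with
  | inl x => exact ⟨fun _ => ⟨x, rfl⟩, fun _ u hu => absurd hu (parent_ne_inl u x)⟩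
  | inr S =>
    simp only [Set.mem_range, reduceCtorEq, exists_false, iff_false, not_forall, exists_prop]
    obtain ⟨x, hx⟩ := F.nonempty_of_mem S.2
    obtain ⟨n, hn⟩ := exists_iterate_parent_inl_eq_iff.2 (show x ∈ F.carrier (inr S) from hx)
    exact Function.exists_apply_eq_and_ne_of_iterate_eq hn inl_ne_inr

variable (F)

noncomputable def toHierarchy (f : Finset α → NNReal)
    (hf : ∀ ⦃S T⦄, S.Nonempty → S ⊆ T → f T ≤ f S) : Hierarchy α where
  V := F.Vertex
  leaf := inl
  leaf_inj := inl_injective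
  root := F.root
  parent := F.parent
  parent_root := parent_root
  reaches_root
    | inl x => exists_iterate_parent_inl_eq_iff.2 (mem_univ x)
    | inr S => exists_iterate_parent_eq_of_subset S.2 F.univ_mem (subset_univ _)
  leaf_iff := leaf_iff
  w v := f (F.carrier v)
  w_le v := hf (carrier_nonempty v) (carrier_subset_carrier_parent v)

variable {F} {f : Finset α → NNReal} {hf : ∀ ⦃S T⦄, S.Nonempty → S ⊆ T → f T ≤ f S}

theorem isLCA_inl_inl {x y : α} (hxy : x ≠ y) {M : Finset α}
    (hM : IsLeast {T | F.mem T ∧ x ∈ T ∧ y ∈ T} M) :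
    (F.toHierarchy f hf).IsLCA (inl x) (inl y) (inr ⟨M, hM.1.1⟩) := by
  refine ⟨exists_iterate_parent_inl_eq_iff.2 hM.1.2.1, exists_iterate_parent_inl_eq_iff.2 hM.1.2.2,
    fun u hxu hyu => ?_⟩
  have hxu' := exists_iterate_parent_inl_eq_iff.1 hxu
  have hyu' := exists_iterate_parent_inl_eq_iff.1 hyu
  cases u with
  | inl z => exact absurd ((mem_singleton.1 hxu').trans (mem_singleton.1 hyu').symm) hxy
  | inr T =>
    exact Hierarchy.depth_le_of_isAncestor _
      (exists_iterate_parent_eq_of_subset hM.1.1 T.2 (hM.2 ⟨T.2, hxu', hyu'⟩))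

end LaminarFamily

section StrongKernel

variable {𝒳 : Type} {β : Type*}

structure IsStrongKernel [LinearOrder β] (k : 𝒳 → 𝒳 → β) : Prop where
  symm : ∀ x y, k x y = k y x
  min_le : ∀ x y z, min (k x z) (k z y) ≤ k x y

theorem IsStrongKernel.le_self [LinearOrder β] {k : 𝒳 → 𝒳 → β} (hk : IsStrongKernel k)
    (x y : 𝒳) : k x y ≤ k x x := by
  simpa [hk.symm y x] using hk.min_le x x y

/-- `⨅` over the empty type of pairs is `⊥`, but only nonempty sets are ever weighed. -/
noncomputable def pairInf [ConditionallyCompleteLinearOrderBot β] (k : 𝒳 → 𝒳 → β)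
    (S : Finset 𝒳) : β :=
  ⨅ p : S × S, k p.1 p.2

section PairInf

variable [ConditionallyCompleteLinearOrderBot β] {k : 𝒳 → 𝒳 → β}

theorem pairInf_le {S : Finset 𝒳} {u v : 𝒳} (hu : u ∈ S) (hv : v ∈ S) : pairInf k S ≤ k u v :=
  ciInf_le (OrderBot.bddBelow _) ((⟨u, hu⟩, ⟨v, hv⟩) : S × S)

theorem le_pairInf {S : Finset 𝒳} {t : β} (hS : S.Nonempty) (h : ∀ u ∈ S, ∀ v ∈ S, t ≤ k u v) :
    t ≤ pairInf k S :=
  have : Nonempty S := hS.to_subtype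
  le_ciInf fun p => h _ p.1.2 _ p.2.2

theorem pairInf_anti {S T : Finset 𝒳} (hS : S.Nonempty) (hST : S ⊆ T) :
    pairInf k T ≤ pairInf k S :=
  le_pairInf hS fun _ hu _ hv => pairInf_le (hST hu) (hST hv)

theorem pairInf_singleton (x : 𝒳) : pairInf k {x} = k x x :=
  le_antisymm (pairInf_le (mem_singleton_self x) (mem_singleton_self x))
    (le_pairInf (singleton_nonempty x) fun u hu v hv => by
      rw [mem_singleton.1 hu, mem_singleton.1 hv])

end PairInf

variable [Fintype 𝒳]

def ball [LinearOrder β] (k : 𝒳 → 𝒳 → β) (x : 𝒳) (t : β) : Finset 𝒳 := univ.filter (t ≤ k x ·)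

def IsBall [LinearOrder β] (k : 𝒳 → 𝒳 → β) (S : Finset 𝒳) : Prop := ∃ x y, S = ball k x (k x y)

section LinearOrder

variable [LinearOrder β] {k : 𝒳 → 𝒳 → β}

theorem mem_ball {x y : 𝒳} {t : β} : y ∈ ball k x t ↔ t ≤ k x y := by
  simp [ball]

theorem ball_subset_ball (x : 𝒳) {s t : β} (h : s ≤ t) : ball k x t ⊆ ball k x s :=
  fun _ hy => mem_ball.2 (h.trans (mem_ball.1 hy))

theorem isBall_univ [Nonempty 𝒳] : IsBall k univ := by
  obtain ⟨p, hp⟩ := Finite.exists_min fun p : 𝒳 × 𝒳 => k p.1 p.2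
  exact ⟨p.1, p.2, (eq_univ_of_forall fun z => mem_ball.2 (hp (p.1, z))).symm⟩

namespace IsStrongKernel

variable (hk : IsStrongKernel k)
include hk

theorem mem_ball_self (x y : 𝒳) : x ∈ ball k x (k x y) :=
  mem_ball.2 (hk.le_self x y)

theorem ball_eq_of_mem {a x : 𝒳} {t : β} (ha : a ∈ ball k x t) : ball k x t = ball k a t := by
  rw [mem_ball] at ha
  ext z
  simp only [mem_ball]
  constructor
  · intro hz
    exact (le_min (hk.symm a x ▸ ha) hz).trans (hk.min_le a z x)
  · intro hz
    exact (le_min ha hz).trans (hk.min_le x z a)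

theorem le_of_mem_ball {x u v : 𝒳} {t : β} (hu : u ∈ ball k x t) (hv : v ∈ ball k x t) :
    t ≤ k u v := by
  rw [hk.ball_eq_of_mem hu] at hv
  exact mem_ball.1 hv

theorem isLeast_ball (x y : 𝒳) :
    IsLeast {T | IsBall k T ∧ x ∈ T ∧ y ∈ T} (ball k x (k x y)) := by
  refine ⟨⟨⟨x, y, rfl⟩, hk.mem_ball_self x y, mem_ball.2 le_rfl⟩, ?_⟩
  rintro _ ⟨⟨p, q, rfl⟩, hx, hy⟩
  rw [hk.ball_eq_of_mem hx] at hy ⊢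
  exact ball_subset_ball x (mem_ball.1 hy)

variable [Nonempty 𝒳]

def ballFamily : LaminarFamily 𝒳 where
  mem := IsBall k
  univ_mem := isBall_univ
  nonempty_of_mem := by
    rintro _ ⟨x, y, rfl⟩
    exact ⟨x, hk.mem_ball_self x y⟩
  subset_or_subset := by
    rintro _ _ a ⟨p, p', rfl⟩ ⟨q, q', rfl⟩ hp hq
    rw [hk.ball_eq_of_mem hp, hk.ball_eq_of_mem hq]
    exact (le_total (k q q') (k p p')).imp (ball_subset_ball a) (ball_subset_ball a)

noncomputable def lca (x y : 𝒳) : hk.ballFamily.Vertex :=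
  if x = y then inl x else inr ⟨ball k x (k x y), x, y, rfl⟩

theorem lca_self (x : 𝒳) : hk.lca x x = inl x := if_pos rfl

theorem lca_of_ne {x y : 𝒳} (hxy : x ≠ y) : hk.lca x y = inr ⟨ball k x (k x y), x, y, rfl⟩ :=
  if_neg hxy

theorem isLCA_lca {f : Finset 𝒳 → NNReal} {hf : ∀ ⦃S T⦄, S.Nonempty → S ⊆ T → f T ≤ f S}
    (x y : 𝒳) : (hk.ballFamily.toHierarchy f hf).IsLCA (inl x) (inl y) (hk.lca x y) := by
  by_cases hxy : x = y
  · subst hxy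
    rw [hk.lca_self]
    exact (hk.ballFamily.toHierarchy f hf).isLCA_self (inl x)
  · rw [hk.lca_of_ne hxy]
    exact LaminarFamily.isLCA_inl_inl hxy (hk.isLeast_ball x y)

end IsStrongKernel

end LinearOrder

theorem IsStrongKernel.pairInf_carrier_lca [ConditionallyCompleteLinearOrderBot β]
    [Nonempty 𝒳] {k : 𝒳 → 𝒳 → β} (hk : IsStrongKernel k) (x y : 𝒳) :
    pairInf k (hk.ballFamily.carrier (hk.lca x y)) = k x y := by
  by_cases hxy : x = y
  · subst hxy
    rw [hk.lca_self]
    exact pairInf_singleton x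
  · rw [hk.lca_of_ne hxy]
    exact le_antisymm (pairInf_le (hk.mem_ball_self x y) (mem_ball.2 le_rfl))
      (le_pairInf ⟨x, hk.mem_ball_self x y⟩ fun _ hu _ hv => hk.le_of_mem_ball hu hv)

end StrongKernel

/-- For every strong kernel `k` on a (nonempty) finite set `𝒳` there is a
hierarchy on `𝒳` that induces `k`. -/
theorem strong_kernel_exists_hierarchy {𝒳 : Type} [Fintype 𝒳] [Nonempty 𝒳]
    (k : 𝒳 → 𝒳 → NNReal)
    (hsymm : ∀ x y : 𝒳, k x y = k y x)
    (hstrong : ∀ x y z : 𝒳, min (k x z) (k z y) ≤ k x y) :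
    ∃ H : Hierarchy 𝒳, ∃ lca : 𝒳 → 𝒳 → H.V,
      (∀ x y : 𝒳, H.IsLCA (H.leaf x) (H.leaf y) (lca x y)) ∧
      ∀ x y : 𝒳, k x y = H.w (lca x y) := by
  have hk : IsStrongKernel k := ⟨hsymm, hstrong⟩
  exact ⟨hk.ballFamily.toHierarchy (pairInf k) fun _ _ => pairInf_anti, hk.lca, hk.isLCA_lca,
    fun x y => (hk.pairInf_carrier_lca x y).symm⟩
end

section
/- Every symmetric strong kernel is positive semidefinite: if 𝒳 is a finite set and k : 𝒳 × 𝒳 → ℝ≥0 is symmetric and satisfies k(x,y) ≥ min(k(x,z), k(z,y)) for all x, y, z ∈ 𝒳, then the matrix [k(x,y)]_{x,y ∈ 𝒳} is positive semidefinite. -/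
/-!
For every threshold `t`, the relation `t ≤ k x y` of a symmetric strong kernel is symmetric and
transitive, so its `0/1` matrix is the Gram matrix of the indicator vectors of its classes and is
positive semidefinite. If `m` is the smallest positive value of `k`, then
`k = m • [m ≤ k] + (k - m)`, where the truncated difference `k - m` is again a symmetric strong
kernel with fewer positive values; by induction, `k` is a nonnegative combination of positive
semidefinite matrices.
-/

open Finset Matrix
open scoped NNReal

variable {X : Type*}

section PartialEquivalence

variable [Fintype X] {r : X → X → Prop} [DecidableRel r] [Std.Symm r] [IsTrans X r]

lemma rel_iff_rel_self_and_filter_eq {x y : X} :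
    r x y ↔ r x x ∧ univ.filter (r y) = univ.filter (r x) ∧ r y y := by
  refine ⟨fun hxy ↦ ⟨_root_.trans hxy (symm hxy), ?_, _root_.trans (symm hxy) hxy⟩, ?_⟩
  · ext z
    simp only [mem_filter, mem_univ, true_and]
    exact ⟨_root_.trans hxy, _root_.trans (symm hxy)⟩
  · rintro ⟨-, hxy, hyy⟩
    have : y ∈ univ.filter (r x) := hxy ▸ by simpa using hyy
    simpa using this

theorem Matrix.posSemidef_of_symm_of_isTrans :
    (of fun x y ↦ if r x y then (1 : ℝ) else 0).PosSemidef := by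
  classical
  let B : Matrix (Finset X) X ℝ := of fun s x ↦ if univ.filter (r x) = s ∧ r x x then 1 else 0
  convert posSemidef_conjTranspose_mul_self B using 1
  ext x y
  simp only [B, mul_apply, conjTranspose_apply, of_apply, star_trivial, ite_and, ite_mul,
    zero_mul, one_mul, sum_ite_eq, mem_univ, if_true]
  simp only [← ite_and]
  exact if_congr (rel_iff_rel_self_and_filter_eq (r := r)) rfl rfl

end PartialEquivalence

def IsStrongKernel_s6 (k : X → X → ℝ≥0) : Prop :=
  ∀ x y z, min (k x z) (k z y) ≤ k x y

namespace IsStrongKernel_s6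

variable {k : X → X → ℝ≥0}

lemma isTrans_le (hk : IsStrongKernel_s6 k) (t : ℝ≥0) : IsTrans X fun x y ↦ t ≤ k x y :=
  ⟨fun x z y hxz hzy ↦ (le_min hxz hzy).trans (hk x y z)⟩

lemma tsub (hk : IsStrongKernel_s6 k) (m : ℝ≥0) : IsStrongKernel_s6 fun x y ↦ k x y - m := by
  have hmono : Monotone fun a : ℝ≥0 ↦ a - m := fun _ _ h ↦ tsub_le_tsub_right h m
  intro x y z
  calc min (k x z - m) (k z y - m) = min (k x z) (k z y) - m := hmono.map_min.symm
    _ ≤ k x y - m := tsub_le_tsub_right (hk x y z) m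

end IsStrongKernel_s6

noncomputable def positiveValues [Fintype X] (k : X → X → ℝ≥0) : Finset ℝ≥0 :=
  {v ∈ univ.image (fun p : X × X ↦ k p.1 p.2) | 0 < v}

section PositiveValues

variable [Fintype X] {k : X → X → ℝ≥0}

lemma mem_positiveValues {v : ℝ≥0} : v ∈ positiveValues k ↔ ∃ x y, k x y = v ∧ 0 < v := by
  simp [positiveValues]

lemma card_positiveValues_tsub_lt {m : ℝ≥0} (hm : m ∈ positiveValues k) :
    #(positiveValues fun x y ↦ k x y - m) < #(positiveValues k) := by
  have hsub : positiveValues (fun x y ↦ k x y - m) ⊆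
      ((positiveValues k).erase m).image (· - m) := by
    intro v hv
    obtain ⟨x, y, rfl, hpos⟩ := mem_positiveValues.1 hv
    have hlt : m < k x y := tsub_pos_iff_lt.1 hpos
    exact mem_image.2 ⟨k x y, mem_erase.2 ⟨hlt.ne',
      mem_positiveValues.2 ⟨x, y, rfl, (mem_filter.1 hm).2.trans hlt⟩⟩, rfl⟩
  calc _ ≤ #(((positiveValues k).erase m).image (· - m)) := card_le_card hsub
    _ ≤ #((positiveValues k).erase m) := card_image_le
    _ < #(positiveValues k) := card_erase_lt_of_mem hm

lemma coe_eq_mul_ite_add_tsub {m : ℝ≥0} (hm : ∀ v ∈ positiveValues k, m ≤ v) (x y : X) :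
    (k x y : ℝ) = m * (if m ≤ k x y then 1 else 0) + ((k x y - m : ℝ≥0) : ℝ) := by
  split_ifs with h
  · rw [NNReal.coe_sub h]
    ring
  · have hzero : k x y = 0 := by
      by_contra h0
      exact h (hm _ (mem_positiveValues.2 ⟨x, y, rfl, pos_of_ne_zero h0⟩))
    simp [hzero]

end PositiveValues

theorem IsStrongKernel_s6.posSemidef [Fintype X] {k : X → X → ℝ≥0} (hk : IsStrongKernel_s6 k)
    (hsymm : ∀ x y, k x y = k y x) : (of fun x y ↦ (k x y : ℝ)).PosSemidef := by
  induction hn : #(positiveValues k) using Nat.strong_induction_on generalizing k with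
  | _ n ih =>
  obtain hempty | hne := (positiveValues k).eq_empty_or_nonempty
  · have hk0 : ∀ x y, k x y = 0 := fun x y ↦ by
      by_contra h0
      simpa [hempty] using mem_positiveValues.2 ⟨x, y, rfl, pos_of_ne_zero h0⟩
    convert PosSemidef.zero (n := X) (R := ℝ)
    ext x y
    simp [hk0]
  set m := (positiveValues k).min' hne
  have hdecomp : (of fun x y ↦ (k x y : ℝ)) =
      (m : ℝ) • (of fun x y ↦ if m ≤ k x y then (1 : ℝ) else 0) +
        of fun x y ↦ ((k x y - m : ℝ≥0) : ℝ) := by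
    ext x y
    simpa using coe_eq_mul_ite_add_tsub (fun v hv ↦ min'_le _ v hv) x y
  have : Std.Symm fun x y ↦ m ≤ k x y := ⟨fun x y h ↦ hsymm x y ▸ h⟩
  have := hk.isTrans_le m
  rw [hdecomp]
  exact (posSemidef_of_symm_of_isTrans.smul m.coe_nonneg).add
    (ih _ (hn ▸ card_positiveValues_tsub_lt (min'_mem _ hne)) (hk.tsub m)
      (fun x y ↦ by rw [hsymm]) rfl)

/-- Every symmetric strong kernel on a finite set is positive semidefinite. -/
theorem strong_kernel_psd {𝒳 : Type} [Fintype 𝒳] (k : 𝒳 → 𝒳 → NNReal)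
    (hsymm : ∀ x y : 𝒳, k x y = k y x)
    (hstrong : ∀ x y z : 𝒳, min (k x z) (k z y) ≤ k x y)
    (c : 𝒳 → ℝ) :
    0 ≤ ∑ x : 𝒳, ∑ y : 𝒳, c x * ((k x y : ℝ)) * c y := by
  have := (IsStrongKernel_s6.posSemidef hstrong hsymm).dotProduct_mulVec_nonneg c
  simpa [dotProduct, mulVec, mul_sum, mul_assoc] using this
end

section
/- For every strong kernel k on a finite set 𝒳, the number of distinct values taken by k is at most 2|𝒳| − 1, i.e., |{k(x,y) : x, y ∈ 𝒳}| ≤ 2|𝒳| − 1 (assuming 𝒳 is nonempty). -/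
/-!
A symmetric strong kernel is the similarity of an ultrametric: for every level `t`, being equal
or at least `t`-similar is an equivalence relation, and it gets finer as `t` grows. If an
off-diagonal value `v = k a b` lies below `w`, then `a` and `b` are merged at level `v` but not
at level `w`, so the number of classes strictly increases along the off-diagonal values. On them
it lies in `[1, n - 1]`, so there are at most `n - 1` off-diagonal values, besides at most `n`
diagonal ones.
-/

open Finset
open scoped Classical

theorem Setoid.card_quotient_lt_of_lt {α : Type*} [Fintype α] {r s : Setoid α} (hrs : r < s) :
    Fintype.card (Quotient s) < Fintype.card (Quotient r) := by
  obtain ⟨a, b, hab, hnab⟩ : ∃ a b, s a b ∧ ¬r a b := by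
    simpa [Setoid.le_def] using hrs.not_ge
  refine Fintype.card_lt_of_surjective_not_injective (Quotient.map id fun _ _ h => hrs.le h)
    (Quotient.map_surjective _ Function.surjective_id) fun hinj => hnab ?_
  exact Quotient.exact (hinj (Quotient.sound hab : (⟦a⟧ : Quotient s) = ⟦b⟧))

namespace StrongKernel

variable {α β : Type*} [LinearOrder β] {k : α → α → β}

def levelSetoid (hsymm : ∀ x y, k x y = k y x)
    (hstrong : ∀ x y z, min (k x z) (k z y) ≤ k x y) (t : β) : Setoid α where
  r x y := x = y ∨ t ≤ k x y
  iseqv :=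
    { refl := fun _ => Or.inl rfl
      symm := by
        rintro x y (rfl | h)
        · exact Or.inl rfl
        · exact Or.inr (hsymm x y ▸ h)
      trans := by
        rintro x y z (rfl | hxy) (rfl | hyz)
        · exact Or.inl rfl
        · exact Or.inr hyz
        · exact Or.inr hxy
        · exact Or.inr ((le_min hxy hyz).trans (hstrong x z y)) }

variable (hsymm : ∀ x y, k x y = k y x) (hstrong : ∀ x y z, min (k x z) (k z y) ≤ k x y)

theorem levelSetoid_lt {a b : α} (hab : a ≠ b) {t : β} (ht : k a b < t) :
    levelSetoid hsymm hstrong t < levelSetoid hsymm hstrong (k a b) := by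
  refine lt_of_le_not_ge (fun x y hxy => ?_) fun hle => ?_
  · exact hxy.imp_right ht.le.trans
  · exact (hle (Or.inr le_rfl : levelSetoid hsymm hstrong (k a b) a b)).elim hab ht.not_ge

theorem card_quotient_levelSetoid_lt [Fintype α] {a b : α} (hab : a ≠ b) :
    Fintype.card (Quotient (levelSetoid hsymm hstrong (k a b))) < Fintype.card α :=
  Fintype.card_lt_of_surjective_not_injective _ Quotient.mk_surjective fun hinj =>
    hab (hinj (Quotient.sound (Or.inr le_rfl : levelSetoid hsymm hstrong (k a b) a b)))

theorem card_image_offDiag_le [Fintype α] [DecidableEq α] [DecidableEq β]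
    (hsymm : ∀ x y, k x y = k y x) (hstrong : ∀ x y z, min (k x z) (k z y) ≤ k x y) :
    (univ.offDiag.image fun p : α × α => k p.1 p.2).card ≤ Fintype.card α - 1 := by
  set V := univ.offDiag.image fun p : α × α => k p.1 p.2
  set c : β → ℕ := fun t => Fintype.card (Quotient (levelSetoid hsymm hstrong t))
  have hc_mono : StrictMonoOn c V := by
    simp only [V, StrictMonoOn, coe_image, Set.forall_mem_image, mem_coe, mem_offDiag]
    rintro ⟨a, b⟩ ⟨-, -, hab : a ≠ b⟩ ⟨x, y⟩ - ht
    exact Setoid.card_quotient_lt_of_lt (levelSetoid_lt hsymm hstrong hab ht)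
  have hc_maps : Set.MapsTo c V (Ico 1 (Fintype.card α)) := by
    simp only [V, Set.MapsTo, coe_image, Set.forall_mem_image, mem_coe, mem_offDiag, mem_Ico]
    rintro ⟨a, b⟩ ⟨-, -, hab : a ≠ b⟩
    exact ⟨Fintype.card_pos_iff.2 ⟨⟦a⟧⟩, card_quotient_levelSetoid_lt hsymm hstrong hab⟩
  simpa using card_le_card_of_injOn c hc_maps hc_mono.injOn

end StrongKernel

/-- A strong kernel on a nonempty finite set `𝒳` takes at most `2|𝒳| - 1`
distinct values. -/
theorem strong_kernel_card_image {𝒳 : Type} [Fintype 𝒳] [Nonempty 𝒳]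
    (k : 𝒳 → 𝒳 → NNReal)
    (hsymm : ∀ x y : 𝒳, k x y = k y x)
    (hstrong : ∀ x y z : 𝒳, min (k x z) (k z y) ≤ k x y) :
    (Finset.image (fun p : 𝒳 × 𝒳 => k p.1 p.2) Finset.univ).card
      ≤ 2 * Fintype.card 𝒳 - 1 := by
  have hdiag : (univ.diag.image fun p : 𝒳 × 𝒳 => k p.1 p.2).card ≤ Fintype.card 𝒳 :=
    card_image_le.trans_eq (diag_card _)
  have hoffDiag := StrongKernel.card_image_offDiag_le hsymm hstrong
  have hpos : 0 < Fintype.card 𝒳 := Fintype.card_pos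
  calc (univ.image fun p : 𝒳 × 𝒳 => k p.1 p.2).card
      = ((univ.diag ∪ univ.offDiag).image fun p : 𝒳 × 𝒳 => k p.1 p.2).card := by
        rw [diag_union_offDiag, univ_product_univ]
    _ ≤ Fintype.card 𝒳 + (Fintype.card 𝒳 - 1) := by
        rw [image_union]
        exact (card_union_le _ _).trans (add_le_add hdiag hoffDiag)
    _ = 2 * Fintype.card 𝒳 - 1 := by omega
end

section
/- Every two-valued kernel is strong: if 𝒳 is a finite set and k : 𝒳 × 𝒳 → ℝ≥0 is symmetric, positive semidefinite (the matrix [k(x,y)]_{x,y∈𝒳} is positive semidefinite), and the image of k has exactly two elements, then k is a strong kernel, i.e., k(x,y) ≥ min(k(x,z), k(z,y)) for all x, y, z ∈ 𝒳. -/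
/-! Let `a < b` be the two values and suppose `k x y = a` while `k x z = k z y = b`. All entries,
in particular the diagonal ones, are at most `b`, so the quadratic form of the kernel at
`c = b (δ_x + δ_y) - (a + b) δ_z` is at most `(a + b) b (a - b) < 0`, contradicting positive
semidefiniteness. -/

theorem Set.eq_or_eq_of_ncard_eq_two {α : Type*} {s : Set α} (hs : s.ncard = 2) {a b c : α}
    (ha : a ∈ s) (hb : b ∈ s) (hc : c ∈ s) (hab : a ≠ b) : c = a ∨ c = b := by
  obtain ⟨u, v, -, rfl⟩ := Set.ncard_eq_two.mp hs
  simp only [Set.mem_insert_iff, Set.mem_singleton_iff] at ha hb hc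
  grind

section QuadraticForm

variable {ι : Type*} [Fintype ι]

theorem sum_sum_mul_mul_add_single [DecidableEq ι] (K : ι → ι → ℝ) (x y z : ι) (s r : ℝ) :
    let c : ι → ℝ := s • (Pi.single x 1 + Pi.single y 1) + r • Pi.single z 1
    ∑ p, ∑ q, c p * K p q * c q =
      s ^ 2 * (K x x + K x y + K y x + K y y) + s * r * (K x z + K y z + K z x + K z y)
        + r ^ 2 * K z z := by
  intro c
  simp only [c, Pi.add_apply, Pi.smul_apply, smul_eq_mul, Pi.single_apply, add_mul, mul_add,
    Finset.sum_add_distrib, mul_ite, ite_mul, mul_one, mul_zero, zero_mul, Finset.sum_ite_eq',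
    Finset.mem_univ, if_true]
  ring

theorem le_of_posSemidef_of_le_diag (K : ι → ι → ℝ) (hsymm : ∀ p q, K p q = K q p)
    (hpsd : ∀ c : ι → ℝ, 0 ≤ ∑ p, ∑ q, c p * K p q * c q) {x y z : ι}
    (hxy : 0 ≤ K x y) (hzy : K z y = K x z) (hdiag : ∀ p, K p p ≤ K x z) :
    K x z ≤ K x y := by
  classical
  by_contra! hab
  set a := K x y
  set b := K x z
  have hQ := sum_sum_mul_mul_add_single K x y z b (-(a + b))
  rw [hsymm y x, hsymm z x, hsymm y z, hzy] at hQ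
  nlinarith [hpsd (b • (Pi.single x 1 + Pi.single y 1) + (-(a + b)) • Pi.single z 1),
    mul_nonneg (sq_nonneg b) (sub_nonneg.mpr (hdiag x)),
    mul_nonneg (sq_nonneg b) (sub_nonneg.mpr (hdiag y)),
    mul_nonneg (sq_nonneg (a + b)) (sub_nonneg.mpr (hdiag z)),
    mul_pos (add_pos_of_nonneg_of_pos hxy (hxy.trans_lt hab)) (hxy.trans_lt hab)]

end QuadraticForm

/-- Every two-valued (symmetric, positive semidefinite) kernel is strong. -/
theorem two_valued_kernel_strong {𝒳 : Type} [Fintype 𝒳] (k : 𝒳 → 𝒳 → NNReal)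
    (hsymm : ∀ x y : 𝒳, k x y = k y x)
    (hpsd : ∀ c : 𝒳 → ℝ, 0 ≤ ∑ x : 𝒳, ∑ y : 𝒳, c x * ((k x y : ℝ)) * c y)
    (himg : (Set.range fun p : 𝒳 × 𝒳 => k p.1 p.2).ncard = 2) :
    ∀ x y z : 𝒳, min (k x z) (k z y) ≤ k x y := by
  intro x y z
  by_contra! h
  obtain ⟨hxz, hzy⟩ := lt_min_iff.mp h
  have hval : ∀ p q, k p q = k x y ∨ k p q = k x z := fun p q =>
    Set.eq_or_eq_of_ncard_eq_two himg ⟨(x, y), rfl⟩ ⟨(x, z), rfl⟩ ⟨(p, q), rfl⟩ hxz.ne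
  have hzy_eq : k z y = k x z := (hval z y).resolve_left hzy.ne'
  have hdiag : ∀ p, k p p ≤ k x z := fun p =>
    (hval p p).elim (fun h => h ▸ hxz.le) le_of_eq
  have := le_of_posSemidef_of_le_diag (fun p q => (k p q : ℝ))
    (fun p q => congrArg _ (hsymm p q)) hpsd (k x y).coe_nonneg
    (congrArg _ hzy_eq) (fun p => NNReal.coe_le_coe.mpr (hdiag p))
  exact hxz.not_ge (NNReal.coe_le_coe.mp this)
end

section
/- Matching-colour counts of a refining sequence of colourings form a strong kernel: let 𝒳 be a finite set, h ∈ ℕ, and ℓ₀, ℓ₁, …, ℓ_h : 𝒳 → C colourings such that for every i < h and all u, v ∈ 𝒳, ℓ_{i+1}(u) = ℓ_{i+1}(v) implies ℓ_i(u) = ℓ_i(v). Then the function k(u,v) = |{i ∈ {0,…,h} : ℓ_i(u) = ℓ_i(v)}| (the number of indices at which u and v have equal colour, viewed as a value in ℝ≥0) is a strong kernel on 𝒳, i.e., k(x,y) ≥ min(k(x,z), k(z,y)) for all x, y, z ∈ 𝒳. -/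
open scoped Classical

/-
Under refinement, agreement of `u` and `v` at level `i` forces agreement at every level `j ≤ i`,
so the set of levels where two points agree is an initial segment of `{0, …, h}`. Two initial
segments are nested, hence the smaller of the agreement sets of `(x, z)` and `(z, y)` is their
intersection, and on that intersection `x` and `y` agree by transitivity of equality.
-/

open Finset

theorem Finset.card_inter_of_isLowerSet {α : Type*} [LinearOrder α] {A B : Finset α}
    (hA : IsLowerSet (A : Set α)) (hB : IsLowerSet (B : Set α)) :
    #(A ∩ B) = min #A #B := by
  rcases hA.total hB with hAB | hBA
  · rw [inter_eq_left.mpr (coe_subset.mp hAB), min_eq_left (card_le_card (coe_subset.mp hAB))]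
  · rw [inter_eq_right.mpr (coe_subset.mp hBA), min_eq_right (card_le_card (coe_subset.mp hBA))]

section Refining

variable {𝒳 C : Type*}

noncomputable def agreementLevels (h : ℕ) (ℓ : ℕ → 𝒳 → C) (u v : 𝒳) : Finset ℕ :=
  (range (h + 1)).filter fun i => ℓ i u = ℓ i v

theorem agreementLevels_inter_subset (h : ℕ) (ℓ : ℕ → 𝒳 → C) (x y z : 𝒳) :
    agreementLevels h ℓ x z ∩ agreementLevels h ℓ z y ⊆ agreementLevels h ℓ x y := by
  intro i
  simp only [agreementLevels, mem_inter, mem_filter]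
  exact fun ⟨⟨hi, hxz⟩, _, hzy⟩ => ⟨hi, hxz.trans hzy⟩

theorem eq_of_le_of_refining {h : ℕ} {ℓ : ℕ → 𝒳 → C}
    (href : ∀ i < h, ∀ u v : 𝒳, ℓ (i + 1) u = ℓ (i + 1) v → ℓ i u = ℓ i v)
    {u v : 𝒳} {i j : ℕ} (hji : j ≤ i) (hih : i ≤ h) (he : ℓ i u = ℓ i v) :
    ℓ j u = ℓ j v :=
  Nat.decreasingInduction' (P := fun k => ℓ k u = ℓ k v)
    (fun k hki _ ih => href k (by omega) u v ih) hji he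

theorem isLowerSet_agreementLevels {h : ℕ} {ℓ : ℕ → 𝒳 → C}
    (href : ∀ i < h, ∀ u v : 𝒳, ℓ (i + 1) u = ℓ (i + 1) v → ℓ i u = ℓ i v) (u v : 𝒳) :
    IsLowerSet (agreementLevels h ℓ u v : Set ℕ) := by
  intro i j hji hi
  simp only [agreementLevels, coe_filter, mem_range, Set.mem_ofPred_eq] at hi ⊢
  exact ⟨by omega, eq_of_le_of_refining href hji (by omega) hi.2⟩

end Refining

theorem refining_colourings_strong_general {𝒳 C : Type}
    (h : ℕ) (ℓ : ℕ → 𝒳 → C)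
    (href : ∀ i < h, ∀ u v : 𝒳, ℓ (i + 1) u = ℓ (i + 1) v → ℓ i u = ℓ i v)
    (x y z : 𝒳) :
    min ((((Finset.range (h + 1)).filter fun i => ℓ i x = ℓ i z).card : NNReal))
        ((((Finset.range (h + 1)).filter fun i => ℓ i z = ℓ i y).card : NNReal))
      ≤ (((Finset.range (h + 1)).filter fun i => ℓ i x = ℓ i y).card : NNReal) := by
  have hmin : min #(agreementLevels h ℓ x z) #(agreementLevels h ℓ z y)
      ≤ #(agreementLevels h ℓ x y) := by
    rw [← card_inter_of_isLowerSet (isLowerSet_agreementLevels href x z)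
      (isLowerSet_agreementLevels href z y)]
    exact card_le_card (agreementLevels_inter_subset h ℓ x y z)
  exact_mod_cast hmin

/-- The number of matching colours along a refining sequence of colourings
`ℓ₀, …, ℓ_h` is a strong kernel. -/
theorem refining_colourings_strong {𝒳 C : Type} [Fintype 𝒳]
    (h : ℕ) (ℓ : ℕ → 𝒳 → C)
    (href : ∀ i < h, ∀ u v : 𝒳, ℓ (i + 1) u = ℓ (i + 1) v → ℓ i u = ℓ i v)
    (x y z : 𝒳) :
    min ((((Finset.range (h + 1)).filter fun i => ℓ i x = ℓ i z).card : NNReal))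
        ((((Finset.range (h + 1)).filter fun i => ℓ i z = ℓ i y).card : NNReal))
      ≤ (((Finset.range (h + 1)).filter fun i => ℓ i x = ℓ i y).card : NNReal) :=
  refining_colourings_strong_general h ℓ href x y z
end

section
/- A strong kernel with constant self-similarity induces an ultrametric: let k : 𝒳 × 𝒳 → ℝ≥0 be a symmetric strong kernel and c ∈ ℝ≥0 with k(x,x) = c for all x ∈ 𝒳. Then the kernel metric d(x,y) = √(2c − 2·k(x,y)) (well-defined since k(x,y) ≤ c) satisfies the ultrametric inequality d(x,y) ≤ max(d(x,z), d(z,y)) for all x, y, z ∈ 𝒳, as well as d(x,x) = 0 and d(x,y) = d(y,x). -/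
/-! The kernel metric `√(2c - 2t)` is an antitone function of the kernel value `t`, and an
antitone map sends `min` to `max`; so the strong-kernel inequality
`min (k x z) (k z y) ≤ k x y` turns into the ultrametric inequality. -/

lemma antitone_sqrt_two_mul_sub (c : ℝ) : Antitone fun t : NNReal => √(2 * c - 2 * (t : ℝ)) := by
  intro s t hst
  dsimp only
  gcongr

/-- A symmetric strong kernel with constant self-similarity `c` induces an
ultrametric: the kernel metric `d x y = √(2c - 2 k x y)` satisfies the ultrametric
inequality, vanishes on the diagonal and is symmetric. -/
theorem strong_kernel_ultrametric {𝒳 : Type} (k : 𝒳 → 𝒳 → NNReal)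
    (hsymm : ∀ x y : 𝒳, k x y = k y x)
    (hstrong : ∀ x y z : 𝒳, min (k x z) (k z y) ≤ k x y)
    (c : NNReal) (hdiag : ∀ x : 𝒳, k x x = c) :
    (∀ x y z : 𝒳,
        Real.sqrt (2 * (c : ℝ) - 2 * (k x y : ℝ))
          ≤ max (Real.sqrt (2 * (c : ℝ) - 2 * (k x z : ℝ)))
              (Real.sqrt (2 * (c : ℝ) - 2 * (k z y : ℝ)))) ∧
    (∀ x : 𝒳, Real.sqrt (2 * (c : ℝ) - 2 * (k x x : ℝ)) = 0) ∧
    (∀ x y : 𝒳,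
        Real.sqrt (2 * (c : ℝ) - 2 * (k x y : ℝ))
          = Real.sqrt (2 * (c : ℝ) - 2 * (k y x : ℝ))) := by
  have hd := antitone_sqrt_two_mul_sub c
  refine ⟨fun x y z => ?_, fun x => by simp [hdiag x], fun x y => by rw [hsymm x y]⟩
  calc √(2 * (c : ℝ) - 2 * (k x y : ℝ))
      ≤ √(2 * (c : ℝ) - 2 * (min (k x z) (k z y) : NNReal)) := hd (hstrong x y z)
    _ = _ := hd.map_min
end
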